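/- arXiv:2203.08109 — 3 statements merged into one kernel-verified Lean document; each statement's English description precedes it below -/
import Mathlib

section
/- Let f : O → ℝ be a function with finite Taibleson variation V_Taib(f) < +∞. Then there exists a countable subset Z of O such that f is continuous at every point of O \ Z. -/
open MeasureTheory Set Filter Topology
open scoped ENNReal NNReal

noncomputable section

namespace NAKoksma

variable (K : Type*) [NontriviallyNormedField K] [IsUltrametricDist K]

/-- The ring of integers `O = {x : K | ‖x‖ ≤ 1}` of a non-Archimedean normed field. -/
def RoI : Subring K where
  carrier := {x : K | ‖x‖ ≤ 1}
  mul_mem' := fun {a b} ha hb => by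
    simp only [Set.mem_setOf_eq] at *
    calc ‖a * b‖ = ‖a‖ * ‖b‖ := norm_mul a b
      _ ≤ 1 * 1 := mul_le_mul ha hb (norm_nonneg b) zero_le_one
      _ = 1 := one_mul 1
  one_mem' := by simp
  add_mem' := fun {a b} ha hb => by
    simp only [Set.mem_setOf_eq] at *
    exact (IsUltrametricDist.norm_add_le_max a b).trans (max_le ha hb)
  zero_mem' := by simp
  neg_mem' := fun {a} ha => by
    simp only [Set.mem_setOf_eq, norm_neg] at *
    exact ha

variable (q : ℕ)

/-- The disc of radius `q ^ (-n)` centered at `a` in the ring of integers. -/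
def disc (a : RoI K) (n : ℕ) : Set (RoI K) :=
  {x : RoI K | ‖(x : K) - (a : K)‖ ≤ (q : ℝ) ^ (-(n : ℤ))}

/-- A subset of `O` is a disc if it is of the form `D_r(a)` with `r = q^(-n)`, `0 < r ≤ 1`. -/
def IsDisc (D : Set (RoI K)) : Prop := ∃ (a : RoI K) (n : ℕ), D = disc K q a n

/-- A Taibleson partition: a finite collection of discs partitioning `O`. -/
def IsTaibPartition (P : Finset (Set (RoI K))) : Prop :=
  (∀ D ∈ P, IsDisc K q D) ∧ (P : Set (Set (RoI K))).PairwiseDisjoint id ∧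
    ⋃₀ (P : Set (Set (RoI K))) = Set.univ

/-- `V_Π(f) = Σ_{D ∈ Π} sup_{x,y ∈ D} (f x - f y)`, valued in `[0,∞]`. -/
def VPi (f : RoI K → ℝ) (P : Finset (Set (RoI K))) : ℝ≥0∞ :=
  ∑ D ∈ P, ⨆ x ∈ D, ⨆ y ∈ D, ENNReal.ofReal (f x - f y)

/-- The Taibleson variation `V_Taib(f) = sup_Π V_Π(f)`. -/
def VTaib (f : RoI K → ℝ) : ℝ≥0∞ :=
  ⨆ P : {P : Finset (Set (RoI K)) // IsTaibPartition K q P}, VPi K f P.1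

variable [MeasurableSpace K]

/-- The discrepancy `Δ(X) = sup_D | |X ∩ D| / |X| - μ(D) |` of a finite set `X ⊆ O`. -/
def discrepancy (μ : Measure (RoI K)) (X : Finset (RoI K)) : ℝ :=
  ⨆ D : {D : Set (RoI K) // IsDisc K q D},
    |(Nat.card ↥((X : Set (RoI K)) ∩ D.1) : ℝ) / (X.card : ℝ) - (μ D.1).toReal|

variable (π : RoI K)

/-- The `i`-th point `m_i = a_0 + a_1 π + ⋯ + a_{λ-1} π^{λ-1}` in the dictionary
ordering of the coefficient strings `(a_0, …, a_{λ-1})` with respect to the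
indexing of the coset representatives `S`. -/
def beerPoint (S : ℕ → RoI K) (lam i : ℕ) : RoI K :=
  ∑ j ∈ Finset.range lam, S (i / q ^ (lam - 1 - j) % q) * π ^ j

/-- `V_λ(f) = sup_{x_i ∈ E_i} Σ_{i=1}^{q^λ - 1} |f(x_i) - f(x_{i-1})|` over the ordered Beer
partition `E_0, …, E_{q^λ - 1}` of level `λ`. -/
def VBeerLevel (S : ℕ → RoI K) (f : RoI K → ℝ) (lam : ℕ) : ℝ≥0∞ :=
  ⨆ x : {x : ℕ → RoI K // ∀ i < q ^ lam, x i ∈ disc K q (beerPoint K q π S lam i) lam},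
    ∑ i ∈ Finset.Ico 1 (q ^ lam), ENNReal.ofReal |f (x.1 i) - f (x.1 (i - 1))|

/-- The Beer variation `V_Beer(f) = lim_{λ→∞} V_λ(f) = sup_{λ ≥ 1} V_λ(f)`. -/
def VBeer (S : ℕ → RoI K) (f : RoI K → ℝ) : ℝ≥0∞ :=
  ⨆ lam : ℕ, VBeerLevel K q π S f (lam + 1)

/-- `S : ℕ → O` (through indices `0, …, q-1`) is a complete ordered system of coset
representatives for the residue field `O/πO`, containing `0`. -/
def IsRepSystem (S : ℕ → RoI K) : Prop :=
  (∃ i, i < q ∧ S i = 0) ∧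
    Function.Bijective fun i : Fin q => Ideal.Quotient.mk (Ideal.span {π}) (S (i : ℕ))

/-- The Berkovich-analytic variation
`V_Berk(f) = Σ_D Σ_{D' ≺ D} |f(D') - f(D)|`, where `D' ≺ D` means `D' ⊆ D` and
`μ(D') = μ(D)/q`, and `f(D)` denotes the average of `f` over `D`. -/
def VBerk (μ : Measure (RoI K)) (f : RoI K → ℝ) : ℝ≥0∞ :=
  ∑' D : {D : Set (RoI K) // IsDisc K q D},
    ∑' D' : {D' : Set (RoI K) // IsDisc K q D' ∧ D' ⊆ D.1 ∧ μ D' = μ D.1 / (q : ℝ≥0∞)},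
      ENNReal.ofReal |(⨍ x in D'.1, f x ∂μ) - ⨍ x in D.1, f x ∂μ|

/-- The level `ℓ(γ)` of a character `γ : O → 𝕋`: the least `ℓ ≥ 0` such that `γ` is trivial
on `π^ℓ O`. -/
def charLevel (γ : AddChar (RoI K) Circle) : ℕ :=
  sInf {l : ℕ | ∀ y : RoI K, γ (π ^ l * y) = 1}

/-- The Fourier coefficient `f̂(γ) = ∫_O f(x) conj(γ(x)) dμ(x)`. -/
def fourierCoeff (μ : Measure (RoI K)) (f : RoI K → ℂ) (γ : AddChar (RoI K) Circle) : ℂ :=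
  ∫ x, f x * (starRingEnd ℂ) ((γ x : Circle) : ℂ) ∂μ

/-- The Fourier-analytic variation `V_Fourier(f) = Σ_{γ ≠ γ₀} q^{ℓ(γ)} |f̂(γ)|`, the sum over
all nontrivial continuous characters of `O`. -/
def VFourier (μ : Measure (RoI K)) (f : RoI K → ℝ) : ℝ≥0∞ :=
  ∑' γ : {γ : AddChar (RoI K) Circle // Continuous ⇑γ ∧ γ ≠ 1},
    ENNReal.ofReal ((q : ℝ) ^ charLevel K π γ.1 * ‖fourierCoeff K μ (fun x => (f x : ℂ)) γ.1‖)

/-- A function is a finite linear combination of characteristic functions of discs. -/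
def IsDiscSimple (g : RoI K → ℝ) : Prop :=
  ∃ (P : Finset (Set (RoI K))) (c : Set (RoI K) → ℝ),
    (∀ D ∈ P, IsDisc K q D) ∧ g = fun x => ∑ D ∈ P, c D * D.indicator 1 x

/-- Integrability in the sense of Beer: `f` can be squeezed between finite linear combinations
of characteristic functions of discs with integrals converging to each other. -/
def BeerIntegrable [MeasurableSpace K] (μ : Measure (RoI K)) (f : RoI K → ℝ) : Prop :=
  ∃ u v : ℕ → RoI K → ℝ,
    (∀ n, IsDiscSimple K q (u n)) ∧ (∀ n, IsDiscSimple K q (v n)) ∧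
    (∀ n x, u n x ≤ f x ∧ f x ≤ v n x) ∧
    Tendsto (fun n => ∫ x, (v n x - u n x) ∂μ) atTop (𝓝 0)

variable [LocallyCompactSpace K] [BorelSpace K]

section AuxCountable

variable {L : Type*} [NontriviallyNormedField L] [IsUltrametricDist L] {r : ℕ}

-- auxiliary lemmas

lemma mem_disc_self (a : RoI L) (n : ℕ) : a ∈ disc L r a n := by
  simp only [disc, Set.mem_setOf_eq, sub_self, norm_zero]
  positivity

lemma disc_subset_of_mem {a b x : RoI L} {n : ℕ} (hx : x ∈ disc L r a n)
    (hx' : x ∈ disc L r b n) : disc L r a n ⊆ disc L r b n := by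
  intro y hy
  simp only [disc, Set.mem_setOf_eq] at *
  have h : (y : L) - b = ((y : L) - a) + (((a : L) - x) + ((x : L) - b)) := by ring
  rw [h]
  refine (IsUltrametricDist.norm_add_le_max _ _).trans (max_le hy
    ((IsUltrametricDist.norm_add_le_max _ _).trans (max_le ?_ hx')))
  rwa [norm_sub_rev]

lemma disc_eq_of_mem {a b x : RoI L} {n : ℕ} (hx : x ∈ disc L r a n)
    (hx' : x ∈ disc L r b n) : disc L r a n = disc L r b n :=
  le_antisymm (disc_subset_of_mem hx hx') (disc_subset_of_mem hx' hx)

lemma isOpen_disc (hq : 0 < r) (a : RoI L) (n : ℕ) : IsOpen (disc L r a n) := by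
  have hq' : (0 : ℝ) < (r : ℝ) ^ (-(n : ℤ)) := by
    have : (0 : ℝ) < r := by exact_mod_cast hq
    positivity
  have h : disc L r a n = Subtype.val ⁻¹' (Metric.closedBall (a : L) ((r : ℝ) ^ (-(n : ℤ)))) := by
    ext y
    simp [disc, Metric.mem_closedBall, dist_eq_norm]
  rw [h]
  exact (IsUltrametricDist.isOpen_closedBall _ hq'.ne').preimage continuous_subtype_val

lemma compactSpace_RoI [LocallyCompactSpace L] : CompactSpace (RoI L) := by
  have : ProperSpace L :=
    ProperSpace.of_nontriviallyNormedField_of_weaklyLocallyCompactSpace L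
  have h : IsCompact {x : L | ‖x‖ ≤ 1} := by
    have h2 := isCompact_closedBall (0 : L) 1
    have h3 : Metric.closedBall (0 : L) 1 = {x : L | ‖x‖ ≤ 1} := by
      ext x; simp [Metric.mem_closedBall, dist_zero_right]
    rwa [h3] at h2
  exact isCompact_iff_compactSpace.mp h

lemma exists_taib_partition [LocallyCompactSpace L] (hq : 0 < r) (n : ℕ) :
    ∃ P : Finset (Set (RoI L)), IsTaibPartition L r P ∧ ∀ x : RoI L, disc L r x n ∈ P := by
  classical
  have := compactSpace_RoI (L := L)
  obtain ⟨t, ht⟩ := isCompact_univ.elim_finite_subcover (fun a : RoI L => disc L r a n)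
    (fun a => isOpen_disc hq a n) (fun x _ => Set.mem_iUnion.mpr ⟨x, mem_disc_self x n⟩)
  refine ⟨t.image (fun a => disc L r a n), ⟨?_, ?_, ?_⟩, ?_⟩
  · intro D hD
    obtain ⟨a, _, rfl⟩ := Finset.mem_image.mp hD
    exact ⟨a, n, rfl⟩
  · intro D hD D' hD' hne
    obtain ⟨a, _, rfl⟩ := Finset.mem_image.mp (Finset.mem_coe.mp hD)
    obtain ⟨b, _, rfl⟩ := Finset.mem_image.mp (Finset.mem_coe.mp hD')
    rw [Function.onFun, Set.disjoint_left]
    intro x hx hx'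
    exact hne (disc_eq_of_mem hx hx')
  · rw [Set.eq_univ_iff_forall]
    intro x
    obtain ⟨a, ha⟩ := Set.mem_iUnion.mp (ht (Set.mem_univ x))
    obtain ⟨hat, hxa⟩ := Set.mem_iUnion.mp ha
    exact Set.mem_sUnion.mpr ⟨disc L r a n,
      Finset.mem_coe.mpr (Finset.mem_image_of_mem _ hat), hxa⟩
  · intro x
    obtain ⟨a, ha⟩ := Set.mem_iUnion.mp (ht (Set.mem_univ x))
    obtain ⟨hat, hxa⟩ := Set.mem_iUnion.mp ha
    rw [← disc_eq_of_mem hxa (mem_disc_self x n)]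
    exact Finset.mem_image_of_mem _ hat


variable (r) in
/-- Oscillation of `f` on the disc of level `n` around `x`. -/
def oscAt (f : RoI L → ℝ) (x : RoI L) (n : ℕ) : ℝ≥0∞ :=
  ⨆ y ∈ disc L r x n, ⨆ z ∈ disc L r x n, ENNReal.ofReal (f y - f z)

lemma exists_level_sep (hq : 1 < r) (T : Finset (RoI L)) :
    ∃ n : ℕ, ∀ x ∈ T, ∀ y ∈ T, x ≠ y → (r : ℝ) ^ (-(n : ℤ)) < ‖(x : L) - (y : L)‖ := by
  classical
  have hq1 : (1 : ℝ) < (r : ℝ) := by exact_mod_cast hq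
  have hq0 : (0 : ℝ) < (r : ℝ) := by positivity
  have key : ∀ p : RoI L × RoI L, ∃ n : ℕ, p.1 ≠ p.2 →
      (r : ℝ) ^ (-(n : ℤ)) < ‖(p.1 : L) - (p.2 : L)‖ := by
    rintro ⟨x, y⟩
    by_cases hxy : x = y
    · exact ⟨0, fun h => absurd hxy h⟩
    · have hpos : 0 < ‖(x : L) - (y : L)‖ := by
        rw [norm_pos_iff, sub_ne_zero]
        exact fun h => hxy (Subtype.coe_injective h)
      obtain ⟨n, hn⟩ := exists_pow_lt_of_lt_one hpos (inv_lt_one_of_one_lt₀ hq1)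
      refine ⟨n, fun _ => ?_⟩
      rwa [zpow_neg, zpow_natCast, ← inv_pow]
  choose g hg using key
  refine ⟨(T ×ˢ T).sup g, fun x hx y hy hxy => ?_⟩
  have hle : g (x, y) ≤ (T ×ˢ T).sup g :=
    Finset.le_sup (Finset.mem_product.mpr ⟨hx, hy⟩)
  have hmono : (r : ℝ) ^ (-(((T ×ˢ T).sup g : ℕ) : ℤ)) ≤ (r : ℝ) ^ (-((g (x, y) : ℕ) : ℤ)) := by
    apply zpow_le_zpow_right₀ hq1.le
    omega
  exact hmono.trans_lt (hg (x, y) hxy)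

lemma card_mul_le_VTaib [LocallyCompactSpace L] (hq : 1 < r) (f : RoI L → ℝ)
    (T : Finset (RoI L)) {ε : ℝ}
    (hT : ∀ x ∈ T, ∀ n : ℕ, ENNReal.ofReal ε ≤ oscAt r f x n) :
    (T.card : ℝ≥0∞) * ENNReal.ofReal ε ≤ VTaib L r f := by
  classical
  obtain ⟨n, hn⟩ := exists_level_sep hq T
  obtain ⟨P, hP, hPmem⟩ := exists_taib_partition (r := r) (L := L) (by omega) n
  have hinj : ∀ x ∈ T, ∀ y ∈ T, disc L r x n = disc L r y n → x = y := by
    intro x hx y hy hxy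
    by_contra hne
    have hmem : y ∈ disc L r x n := hxy ▸ mem_disc_self y n
    have : ‖(y : L) - (x : L)‖ ≤ (r : ℝ) ^ (-(n : ℤ)) := hmem
    exact absurd this (not_le.mpr (hn y hy x hx (Ne.symm hne)))
  have hsub : T.image (fun x => disc L r x n) ⊆ P := by
    intro D hD
    obtain ⟨x, _, rfl⟩ := Finset.mem_image.mp hD
    exact hPmem x
  calc (T.card : ℝ≥0∞) * ENNReal.ofReal ε = ∑ _x ∈ T, ENNReal.ofReal ε := by
        rw [Finset.sum_const, nsmul_eq_mul]
    _ ≤ ∑ x ∈ T, oscAt r f x n := Finset.sum_le_sum fun x hx => hT x hx n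
    _ = ∑ D ∈ T.image (fun x => disc L r x n),
          ⨆ y ∈ D, ⨆ z ∈ D, ENNReal.ofReal (f y - f z) := by
        rw [Finset.sum_image hinj]; rfl
    _ ≤ ∑ D ∈ P, ⨆ y ∈ D, ⨆ z ∈ D, ENNReal.ofReal (f y - f z) :=
        Finset.sum_le_sum_of_subset hsub
    _ = VPi L f P := rfl
    _ ≤ VTaib L r f := le_iSup (fun P : {P : Finset (Set (RoI L)) // IsTaibPartition L r P} =>
        VPi L f P.1) ⟨P, hP⟩



end AuxCountable

theorem taibleson_finite_variation_continuous_off_countable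
    (hq : 1 < q)
    (hπ : ‖(π : K)‖ = (q : ℝ)⁻¹)
    (hunif : ∀ x : RoI K, ‖(x : K)‖ < 1 → ‖(x : K)‖ ≤ ‖(π : K)‖)
    (hres : Nat.card (↥(RoI K) ⧸ (Ideal.span {π} : Ideal ↥(RoI K))) = q)
    (f : RoI K → ℝ) (hf : VTaib K q f < ⊤) :
    ∃ Z : Set (RoI K), Z.Countable ∧ ∀ x : RoI K, x ∉ Z → ContinuousAt f x := by
  classical
  refine ⟨⋃ k : ℕ, {x : RoI K | ∀ n : ℕ,
    ENNReal.ofReal (1 / ((k : ℝ) + 1)) ≤ oscAt q f x n}, ?_, ?_⟩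
  · refine Set.countable_iUnion fun k => Set.Finite.countable ?_
    by_contra hinf
    have hinf' : {x : RoI K | ∀ n : ℕ,
        ENNReal.ofReal (1 / ((k : ℝ) + 1)) ≤ oscAt q f x n}.Infinite := hinf
    have hε : (0 : ℝ) < 1 / ((k : ℝ) + 1) := by positivity
    have hε' : (0 : ℝ≥0∞) < ENNReal.ofReal (1 / ((k : ℝ) + 1)) := ENNReal.ofReal_pos.mpr hε
    have hC : VTaib K q f / ENNReal.ofReal (1 / ((k : ℝ) + 1)) ≠ ⊤ :=
      (ENNReal.div_lt_top hf.ne hε'.ne').ne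
    obtain ⟨m, hm⟩ := ENNReal.exists_nat_gt hC
    obtain ⟨T, hTsub, hTcard⟩ := hinf'.exists_subset_card_eq m
    have hbound := card_mul_le_VTaib hq f T (fun x hx n => hTsub hx n)
    rw [hTcard] at hbound
    have hle : (m : ℝ≥0∞) ≤ VTaib K q f / ENNReal.ofReal (1 / ((k : ℝ) + 1)) :=
      (ENNReal.le_div_iff_mul_le (Or.inl hε'.ne') (Or.inl ENNReal.ofReal_ne_top)).mpr hbound
    exact absurd hle (not_le.mpr hm)
  · intro x hx
    simp only [Set.mem_iUnion, Set.mem_setOf_eq, not_exists, not_forall, not_le] at hx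
    rw [ContinuousAt, Metric.tendsto_nhds]
    intro ε hε
    obtain ⟨k, hk⟩ := exists_nat_one_div_lt hε
    obtain ⟨n, hn⟩ := hx k
    have hlt : oscAt q f x n < ENNReal.ofReal ε :=
      hn.trans_le (ENNReal.ofReal_le_ofReal hk.le)
    filter_upwards [(isOpen_disc (r := q) (Nat.zero_lt_of_lt hq) x n).mem_nhds (mem_disc_self x n)] with y hy
    rw [Real.dist_eq, abs_sub_lt_iff]
    have key : ∀ a b : RoI K, a ∈ disc K q x n → b ∈ disc K q x n → f a - f b < ε := by
      intro a b ha hb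
      have h1 : ENNReal.ofReal (f a - f b) ≤ oscAt q f x n := by
        unfold oscAt
        exact le_iSup₂_of_le a ha (le_iSup₂_of_le b hb le_rfl)
      exact (ENNReal.ofReal_lt_ofReal_iff hε).mp (h1.trans_lt hlt)
    exact ⟨key y x hy (mem_disc_self x n), key x y (mem_disc_self x n) hy⟩


end NAKoksma
end
end

section
/- For every function f : O → ℝ, the Taibleson variation is bounded above by the Beer variation: V_Taib(f) ≤ V_Beer(f). -/
/-!
Fix a Taibleson partition `Π` and points `x_D, y_D ∈ D` for `D ∈ Π`. At a level `λ` finer than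
every disc of `Π`, the Beer discs `E_i` meeting a disc `D` of radius `q^{-n}` are those whose
indices `i` share the leading `n` base-`q` digits, so they form a block of consecutive indices,
and distinct discs of `Π` give disjoint blocks. Taking `λ` so fine that, moreover, all the points
`x_D, y_D` lie in distinct Beer discs, there is a point selection `x_i ∈ E_i` passing through all
of them, and `|f(x_D) - f(y_D)|` telescopes along the block of `D`. Summing over `Π` bounds
`V_Π(f)` by `V_λ(f) ≤ V_Beer(f)`.
-/

open MeasureTheory Set Filter Topology
open scoped ENNReal NNReal

noncomputable section

namespace NAKoksma

variable (K : Type*) [NontriviallyNormedField K] [IsUltrametricDist K]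

variable (q : ℕ)

variable [MeasurableSpace K]

variable (π : RoI K)

theorem sum_biSup_le {ι α : Type*} {s : Finset ι} {A : ι → Set α}
    (hA : ∀ i ∈ s, (A i).Nonempty) {F : ι → α → ℝ≥0∞} {C : ℝ≥0∞}
    (h : ∀ x : ι → α, (∀ i ∈ s, x i ∈ A i) → ∑ i ∈ s, F i (x i) ≤ C) :
    ∑ i ∈ s, ⨆ a ∈ A i, F i a ≤ C := by
  classical
  rcases s.eq_empty_or_nonempty with rfl | ⟨i₀, hi₀⟩
  · simp
  have : Nonempty α := (hA i₀ hi₀).to_subtype.map Subtype.val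
  choose! x₀ hx₀ using hA
  let X := {x : ι → α // ∀ i ∈ s, x i ∈ A i}
  have hsup : ∀ i ∈ s, ⨆ a ∈ A i, F i a = ⨆ x : X, F i (x.1 i) := by
    intro i hi
    refine le_antisymm (iSup₂_le fun a ha => ?_) (iSup_le fun x => le_biSup _ (x.2 i hi))
    refine le_iSup_of_le ⟨Function.update x₀ i a, fun j hj => ?_⟩ (by simp)
    rcases eq_or_ne j i with rfl | hji
    · simpa using ha
    · simpa [hji] using hx₀ j hj
  have hdir : ∀ x y : X, ∃ z : X, ∀ i, F i (x.1 i) ≤ F i (z.1 i) ∧ F i (y.1 i) ≤ F i (z.1 i) := by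
    intro x y
    refine ⟨⟨fun i => if F i (x.1 i) ≤ F i (y.1 i) then y.1 i else x.1 i, fun i hi => ?_⟩,
      fun i => ?_⟩
    · dsimp only
      split_ifs
      exacts [y.2 i hi, x.2 i hi]
    · dsimp only
      split_ifs with hxy
      exacts [⟨hxy, le_rfl⟩, ⟨le_rfl, (not_le.1 hxy).le⟩]
  rw [Finset.sum_congr rfl hsup, ENNReal.finsetSum_iSup hdir]
  exact iSup_le fun x => h x.1 x.2

theorem sum_edist_le_sum_range_edist {α ι : Type*} [PseudoEMetricSpace α] (u : ℕ → α)
    {T : Finset ι} {a b : ι → ℕ} {N : ℕ}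
    (hdisj : (T : Set ι).PairwiseDisjoint fun t => Finset.Ico (min (a t) (b t)) (max (a t) (b t)))
    (hN : ∀ t ∈ T, max (a t) (b t) ≤ N) :
    ∑ t ∈ T, edist (u (a t)) (u (b t)) ≤ ∑ i ∈ Finset.range N, edist (u i) (u (i + 1)) := by
  classical
  have hblock : ∀ t, edist (u (a t)) (u (b t)) ≤
      ∑ i ∈ Finset.Ico (min (a t) (b t)) (max (a t) (b t)), edist (u i) (u (i + 1)) := by
    intro t
    rcases le_total (a t) (b t) with h | h
    · simpa [h] using edist_le_Ico_sum_edist u h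
    · simpa [h, edist_comm] using edist_le_Ico_sum_edist u h
  calc ∑ t ∈ T, edist (u (a t)) (u (b t))
      ≤ ∑ t ∈ T, ∑ i ∈ Finset.Ico (min (a t) (b t)) (max (a t) (b t)),
          edist (u i) (u (i + 1)) := Finset.sum_le_sum fun t _ => hblock t
    _ = ∑ i ∈ T.biUnion fun t => Finset.Ico (min (a t) (b t)) (max (a t) (b t)),
          edist (u i) (u (i + 1)) := (Finset.sum_biUnion hdisj).symm
    _ ≤ ∑ i ∈ Finset.range N, edist (u i) (u (i + 1)) := by
      refine Finset.sum_le_sum_of_subset fun i hi => ?_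
      obtain ⟨t, ht, hi⟩ := Finset.mem_biUnion.1 hi
      exact Finset.mem_range.2 ((Finset.mem_Ico.1 hi).2.trans_le (hN t ht))

theorem sum_Ico_one_ofReal_abs_sub (v : ℕ → ℝ) (N : ℕ) :
    ∑ i ∈ Finset.Ico 1 N, ENNReal.ofReal |v i - v (i - 1)| =
      ∑ i ∈ Finset.range (N - 1), edist (v i) (v (i + 1)) := by
  rw [Finset.sum_Ico_eq_sum_range]
  refine Finset.sum_congr rfl fun i _ => ?_
  rw [edist_dist, Real.dist_eq, abs_sub_comm, add_comm, Nat.add_sub_cancel]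

theorem eventually_pairwise_lt_dist {X : Type*} [MetricSpace X] {Z : Set X}
    (hZ : Z.Finite) {ε : ℕ → ℝ} (hε : Tendsto ε atTop (𝓝 0)) :
    ∀ᶠ n in atTop, Z.Pairwise fun z w => ε n < dist z w := by
  refine (hZ.eventually_all (l := atTop)).2 fun z _ =>
    (hZ.eventually_all (l := atTop)).2 fun w _ => ?_
  exact eventually_imp_distrib_left.2 fun hzw => hε.eventually (gt_mem_nhds (dist_pos.2 hzw))

theorem mul_pow_add_div_pow (a i : ℕ) {q lam m : ℕ} (hq : 0 < q) (hm : m ≤ lam) :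
    (a * q ^ lam + i) / q ^ m = a * q ^ (lam - m) + i / q ^ m := by
  rw [show q ^ lam = q ^ (lam - m) * q ^ m by rw [← pow_add, Nat.sub_add_cancel hm],
    ← mul_assoc, add_comm, Nat.add_mul_div_right _ _ (pow_pos hq m), add_comm]

theorem mul_pow_add_lt_pow_succ {a i q lam : ℕ} (ha : a < q) (hi : i < q ^ lam) :
    a * q ^ lam + i < q ^ (lam + 1) := by
  rw [pow_succ']
  nlinarith

theorem exists_eq_mul_pow_add {i q lam : ℕ} (hi : i < q ^ (lam + 1)) :
    ∃ a < q, ∃ i' < q ^ lam, i = a * q ^ lam + i' := by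
  have hq : 0 < q ^ lam := Nat.pos_of_ne_zero fun h => by simp_all [pow_succ]
  exact ⟨i / q ^ lam, Nat.div_lt_of_lt_mul (by rwa [← pow_succ]), i % q ^ lam,
    Nat.mod_lt _ hq, (Nat.div_add_mod' i _).symm⟩

theorem mul_pow_add_div_pow_eq_iff {a b i j q lam n : ℕ} (hq : 0 < q) (hi : i < q ^ lam)
    (hj : j < q ^ lam) (hn : n ≤ lam) :
    (a * q ^ lam + i) / q ^ (lam - n) = (b * q ^ lam + j) / q ^ (lam - n) ↔
      a = b ∧ i / q ^ (lam - n) = j / q ^ (lam - n) := by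
  have hlt : ∀ k < q ^ lam, k / q ^ (lam - n) < q ^ n := fun k hk =>
    Nat.div_lt_of_lt_mul (by rwa [← pow_add, Nat.sub_add_cancel hn])
  rw [mul_pow_add_div_pow a i hq (Nat.sub_le lam n), mul_pow_add_div_pow b j hq (Nat.sub_le lam n),
    Nat.sub_sub_self hn]
  constructor
  · intro h
    have hdiv := congrArg (· / q ^ n) h
    have hmod := congrArg (· % q ^ n) h
    simp only [add_comm (_ * q ^ n), Nat.add_mul_div_right _ _ (pow_pos hq n),
      Nat.add_mul_mod_self_right, Nat.div_eq_of_lt (hlt i hi), Nat.div_eq_of_lt (hlt j hj),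
      Nat.mod_eq_of_lt (hlt i hi), Nat.mod_eq_of_lt (hlt j hj), zero_add] at hdiv hmod
    exact ⟨hdiv, hmod⟩
  · rintro ⟨rfl, h⟩
    rw [h]

theorem exists_section_of_injOn {α : Type*} {Z : Set α} {idx : α → ℕ} (hinj : Set.InjOn idx Z)
    {E : ℕ → Set α} (hE : ∀ i, (E i).Nonempty) (hZ : ∀ z ∈ Z, z ∈ E (idx z)) :
    ∃ χ : ℕ → α, (∀ i, χ i ∈ E i) ∧ ∀ z ∈ Z, χ (idx z) = z := by
  classical
  have : Nonempty α := ⟨(hE 0).some⟩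
  refine ⟨fun i => if i ∈ idx '' Z then Function.invFunOn idx Z i else (hE i).some,
    fun i => ?_, fun z hz => ?_⟩
  · dsimp only
    split_ifs with h
    · simpa [Function.invFunOn_eq h] using hZ _ (Function.invFunOn_mem h)
    · exact (hE i).some_mem
  · simp only [Set.mem_image_of_mem idx hz, if_true]
    exact hinj.leftInvOn_invFunOn hz

section BeerPoints

omit [MeasurableSpace K]

variable {K q π} {S : ℕ → RoI K}

theorem disc_eq_closedBall (a : RoI K) (n : ℕ) :
    disc K q a n = Metric.closedBall a ((q : ℝ)⁻¹ ^ n) := by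
  ext x
  rw [Metric.mem_closedBall, dist_eq_norm, inv_pow, ← zpow_natCast, ← zpow_neg]
  rfl

theorem dist_le_one (x y : RoI K) : dist x y ≤ 1 := by
  rw [dist_eq_norm]
  exact (x - y).2

theorem beerPoint_zero (i : ℕ) : beerPoint K q π S 0 i = 0 := by
  simp [beerPoint]

theorem beerPoint_succ {a i lam : ℕ} (ha : a < q) (hi : i < q ^ lam) :
    beerPoint K q π S (lam + 1) (a * q ^ lam + i) = S a + π * beerPoint K q π S lam i := by
  have hq : 0 < q := by omega
  have hdigit : ∀ j < lam,
      (a * q ^ lam + i) / q ^ (lam - 1 - j) % q = i / q ^ (lam - 1 - j) % q := by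
    intro j hj
    rw [mul_pow_add_div_pow a i hq (by omega), show lam - (lam - 1 - j) = j + 1 by omega,
      pow_succ, ← mul_assoc, add_comm, Nat.add_mul_mod_self_right]
  have htop : (a * q ^ lam + i) / q ^ lam % q = a := by
    rw [mul_pow_add_div_pow a i hq le_rfl, Nat.sub_self, pow_zero, mul_one,
      Nat.div_eq_of_lt hi, add_zero, Nat.mod_eq_of_lt ha]
  rw [beerPoint, Finset.sum_range_succ', beerPoint, Finset.mul_sum, add_comm]
  simp only [Nat.add_sub_cancel, Nat.sub_zero, htop, pow_zero, mul_one]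
  congr 1
  refine Finset.sum_congr rfl fun j hj => ?_
  rw [show lam - (j + 1) = lam - 1 - j by omega, hdigit j (Finset.mem_range.1 hj), pow_succ']
  ring

theorem mem_span_singleton_of_norm_lt_one (hπ0 : π ≠ 0)
    (hunif : ∀ x : RoI K, ‖(x : K)‖ < 1 → ‖(x : K)‖ ≤ ‖(π : K)‖) {x : RoI K} (hx : ‖x‖ < 1) :
    x ∈ Ideal.span {π} := by
  have hπK : (π : K) ≠ 0 := by exact_mod_cast hπ0
  have hw : ‖(x : K) / π‖ ≤ 1 := by
    rw [norm_div]
    exact div_le_one_of_le₀ (hunif x hx) (norm_nonneg _)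
  refine Ideal.mem_span_singleton.2 ⟨⟨(x : K) / π, hw⟩, Subtype.ext ?_⟩
  change (x : K) = π * ((x : K) / π)
  rw [mul_div_cancel₀ _ hπK]

theorem norm_sub_eq_one (hπ : ‖(π : K)‖ = (q : ℝ)⁻¹)
    (hunif : ∀ x : RoI K, ‖(x : K)‖ < 1 → ‖(x : K)‖ ≤ ‖(π : K)‖) (hS : IsRepSystem K q π S)
    {a b : ℕ} (ha : a < q) (hb : b < q) (hab : a ≠ b) : ‖S a - S b‖ = 1 := by
  have hπ0 : π ≠ 0 := by
    rintro rfl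
    simp [eq_comm] at hπ
    omega
  refine (S a - S b).2.eq_or_lt.resolve_right fun hlt => hab ?_
  have hmem := mem_span_singleton_of_norm_lt_one hπ0 hunif hlt
  have := hS.2.1 (a₁ := ⟨a, ha⟩) (a₂ := ⟨b, hb⟩) ((Ideal.Quotient.mk_eq_mk_iff_sub_mem _ _).2 hmem)
  exact congrArg Fin.val this

theorem dist_beerPoint_succ_of_eq (hπ : ‖(π : K)‖ = (q : ℝ)⁻¹) {a i j lam : ℕ} (ha : a < q)
    (hi : i < q ^ lam) (hj : j < q ^ lam) :
    dist (beerPoint K q π S (lam + 1) (a * q ^ lam + i))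
        (beerPoint K q π S (lam + 1) (a * q ^ lam + j)) =
      (q : ℝ)⁻¹ * dist (beerPoint K q π S lam i) (beerPoint K q π S lam j) := by
  rw [beerPoint_succ ha hi, beerPoint_succ ha hj, dist_eq_norm, dist_eq_norm,
    add_sub_add_left_eq_sub, ← mul_sub, norm_mul, show ‖π‖ = (q : ℝ)⁻¹ from hπ]

theorem dist_beerPoint_succ_of_ne (hq : 1 < q) (hπ : ‖(π : K)‖ = (q : ℝ)⁻¹)
    (hunif : ∀ x : RoI K, ‖(x : K)‖ < 1 → ‖(x : K)‖ ≤ ‖(π : K)‖) (hS : IsRepSystem K q π S)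
    {a b i j lam : ℕ} (ha : a < q) (hb : b < q) (hab : a ≠ b) (hi : i < q ^ lam)
    (hj : j < q ^ lam) :
    dist (beerPoint K q π S (lam + 1) (a * q ^ lam + i))
      (beerPoint K q π S (lam + 1) (b * q ^ lam + j)) = 1 := by
  have hS1 := norm_sub_eq_one hπ hunif hS ha hb hab
  have hsmall : ‖π * (beerPoint K q π S lam i - beerPoint K q π S lam j)‖ < 1 := by
    rw [norm_mul, show ‖π‖ = (q : ℝ)⁻¹ from hπ]
    calc (q : ℝ)⁻¹ * ‖beerPoint K q π S lam i - beerPoint K q π S lam j‖ ≤ (q : ℝ)⁻¹ * 1 := by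
          gcongr
          exact (_ - _ : RoI K).2
      _ < 1 := by
          rw [mul_one]
          exact inv_lt_one_of_one_lt₀ (by exact_mod_cast hq)
  rw [beerPoint_succ ha hi, beerPoint_succ hb hj, dist_eq_norm, add_sub_add_comm, ← mul_sub,
    IsUltrametricDist.norm_add_eq_max_of_norm_ne_norm (hS1 ▸ hsmall.ne'), hS1,
    max_eq_left hsmall.le]

/-- `i / q ^ (lam - n)` is the string of the leading `n` base-`q` digits of an index
`i < q ^ lam`, i.e. the first `n` coefficients of the Beer point `m_i`. -/
theorem dist_beerPoint_le_iff (hq : 1 < q) (hπ : ‖(π : K)‖ = (q : ℝ)⁻¹)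
    (hunif : ∀ x : RoI K, ‖(x : K)‖ < 1 → ‖(x : K)‖ ≤ ‖(π : K)‖) (hS : IsRepSystem K q π S)
    {lam n i j : ℕ} (hn : n ≤ lam) (hi : i < q ^ lam) (hj : j < q ^ lam) :
    dist (beerPoint K q π S lam i) (beerPoint K q π S lam j) ≤ (q : ℝ)⁻¹ ^ n ↔
      i / q ^ (lam - n) = j / q ^ (lam - n) := by
  induction lam generalizing n i j with
  | zero =>
    obtain rfl : n = 0 := by omega
    simp_all
  | succ lam ih =>
    obtain ⟨a, ha, i', hi', rfl⟩ := exists_eq_mul_pow_add hi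
    obtain ⟨b, hb, j', hj', rfl⟩ := exists_eq_mul_pow_add hj
    rcases n with _ | n
    · refine iff_of_true (by simpa using dist_le_one _ _) ?_
      rw [Nat.sub_zero, Nat.div_eq_of_lt hi, Nat.div_eq_of_lt hj]
    rw [Nat.add_sub_add_right, mul_pow_add_div_pow_eq_iff (by omega) hi' hj' (by omega)]
    rcases eq_or_ne a b with rfl | hab
    · rw [dist_beerPoint_succ_of_eq hπ ha hi' hj', pow_succ',
        mul_le_mul_iff_right₀ (by positivity), ih (by omega) hi' hj', and_iff_right rfl]
    · rw [dist_beerPoint_succ_of_ne hq hπ hunif hS ha hb hab hi' hj']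
      refine iff_of_false (not_le.2 (pow_lt_one₀ (by positivity) ?_ n.succ_ne_zero)) (hab ·.1)
      exact inv_lt_one_of_one_lt₀ (by exact_mod_cast hq)

theorem exists_dist_beerPoint_le (hπ : ‖(π : K)‖ = (q : ℝ)⁻¹) (hS : IsRepSystem K q π S)
    (lam : ℕ) (x : RoI K) :
    ∃ i < q ^ lam, dist x (beerPoint K q π S lam i) ≤ (q : ℝ)⁻¹ ^ lam := by
  induction lam generalizing x with
  | zero => exact ⟨0, by simp, by simpa [beerPoint_zero] using dist_le_one x 0⟩
  | succ lam ih =>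
    obtain ⟨a, ha⟩ := hS.2.2 (Ideal.Quotient.mk _ x)
    obtain ⟨y, hy⟩ := Ideal.mem_span_singleton'.1
      ((Ideal.Quotient.mk_eq_mk_iff_sub_mem _ _).1 ha.symm)
    obtain ⟨i, hi, hyi⟩ := ih y
    refine ⟨a * q ^ lam + i, mul_pow_add_lt_pow_succ a.2 hi, ?_⟩
    have hx : x - (S a + π * beerPoint K q π S lam i) = π * (y - beerPoint K q π S lam i) := by
      rw [sub_add_eq_sub_sub, ← hy]
      ring
    rw [beerPoint_succ a.2 hi, dist_eq_norm, hx, norm_mul, show ‖π‖ = (q : ℝ)⁻¹ from hπ,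
      ← dist_eq_norm, pow_succ']
    gcongr

theorem beerPoint_mem_closedBall_of_between (hq : 1 < q) (hπ : ‖(π : K)‖ = (q : ℝ)⁻¹)
    (hunif : ∀ x : RoI K, ‖(x : K)‖ < 1 → ‖(x : K)‖ ≤ ‖(π : K)‖) (hS : IsRepSystem K q π S)
    {lam n i j k : ℕ} (hn : n ≤ lam) (hj : j < q ^ lam) (hk : k < q ^ lam) {c z w : RoI K}
    (hz : z ∈ Metric.closedBall c ((q : ℝ)⁻¹ ^ n)) (hw : w ∈ Metric.closedBall c ((q : ℝ)⁻¹ ^ n))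
    (hzj : dist z (beerPoint K q π S lam j) ≤ (q : ℝ)⁻¹ ^ lam)
    (hwk : dist w (beerPoint K q π S lam k) ≤ (q : ℝ)⁻¹ ^ lam)
    (hi : min j k ≤ i) (hi' : i ≤ max j k) :
    beerPoint K q π S lam i ∈ Metric.closedBall c ((q : ℝ)⁻¹ ^ n) := by
  wlog hjk : j ≤ k generalizing j k z w
  · exact this hk hj hw hz hwk hzj (min_comm j k ▸ hi) (max_comm j k ▸ hi') (le_of_not_ge hjk)
  rw [min_eq_left hjk] at hi
  rw [max_eq_right hjk] at hi'
  have hlam : (q : ℝ)⁻¹ ^ lam ≤ (q : ℝ)⁻¹ ^ n :=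
    pow_le_pow_of_le_one (by positivity) (inv_le_one_of_one_le₀ (by exact_mod_cast hq.le)) hn
  have hnear : ∀ {v : RoI K} {l : ℕ}, v ∈ Metric.closedBall c ((q : ℝ)⁻¹ ^ n) →
      dist v (beerPoint K q π S lam l) ≤ (q : ℝ)⁻¹ ^ lam →
      beerPoint K q π S lam l ∈ Metric.closedBall c ((q : ℝ)⁻¹ ^ n) := fun hv hvl => by
    rw [IsUltrametricDist.closedBall_eq_of_mem hv, Metric.mem_closedBall, dist_comm]
    exact hvl.trans hlam
  have hjc := hnear hz hzj
  have hkc := hnear hw hwk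
  rw [IsUltrametricDist.closedBall_eq_of_mem hjc] at hkc ⊢
  have hdiv := (dist_beerPoint_le_iff hq hπ hunif hS hn hk hj).1 hkc
  refine (dist_beerPoint_le_iff hq hπ hunif hS hn (hi'.trans_lt hk) hj).2 (le_antisymm ?_ ?_)
  · exact hdiv ▸ Nat.div_le_div_right hi'
  · exact Nat.div_le_div_right hi
theorem sum_edist_le_VBeerLevel (hq : 1 < q) (hπ : ‖(π : K)‖ = (q : ℝ)⁻¹)
    (hunif : ∀ x : RoI K, ‖(x : K)‖ < 1 → ‖(x : K)‖ ≤ ‖(π : K)‖) (hS : IsRepSystem K q π S)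
    (f : RoI K → ℝ) {P : Finset (Set (RoI K))}
    (hdisj : (P : Set (Set (RoI K))).PairwiseDisjoint id) {lam : ℕ}
    (hball : ∀ D ∈ P, ∃ c, ∃ n ≤ lam, D = Metric.closedBall c ((q : ℝ)⁻¹ ^ n))
    {x y : Set (RoI K) → RoI K} (hx : ∀ D ∈ P, x D ∈ D) (hy : ∀ D ∈ P, y D ∈ D)
    (hsep : (x '' P ∪ y '' P).Pairwise fun z w => (q : ℝ)⁻¹ ^ lam < dist z w) :
    ∑ D ∈ P, edist (f (x D)) (f (y D)) ≤ VBeerLevel K q π S f lam := by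
  choose idx hidx_lt hidx using exists_dist_beerPoint_le hπ hS lam
  have hinj : Set.InjOn idx (x '' P ∪ y '' P) := fun z hz w hw hzw => by
    by_contra hne
    refine (hsep hz hw hne).not_ge ((dist_triangle_max z _ w).trans (max_le (hidx z) ?_))
    rw [hzw, dist_comm]
    exact hidx w
  obtain ⟨χ, hχ_mem, hχ_idx⟩ := exists_section_of_injOn hinj
    (E := fun i => disc K q (beerPoint K q π S lam i) lam)
    (fun i => ⟨_, by rw [disc_eq_closedBall]; exact Metric.mem_closedBall_self (by positivity)⟩)
    (fun z _ => by simpa [disc_eq_closedBall] using hidx z)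
  have hblock : ∀ D ∈ P, ∀ i, min (idx (x D)) (idx (y D)) ≤ i →
      i ≤ max (idx (x D)) (idx (y D)) → beerPoint K q π S lam i ∈ D := by
    intro D hD i hi hi'
    obtain ⟨c, n, hn, rfl⟩ := hball D hD
    exact beerPoint_mem_closedBall_of_between hq hπ hunif hS hn (hidx_lt _) (hidx_lt _)
      (hx _ hD) (hy _ hD) (hidx _) (hidx _) hi hi'
  have hdisj' : (P : Set (Set (RoI K))).PairwiseDisjoint
      fun D => Finset.Ico (min (idx (x D)) (idx (y D))) (max (idx (x D)) (idx (y D))) := by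
    intro D hD D' hD' hne
    refine Finset.disjoint_left.2 fun i hi hi' => ?_
    rw [Finset.mem_Ico] at hi hi'
    exact Set.disjoint_left.1 (hdisj hD hD' hne) (hblock D hD i hi.1 hi.2.le)
      (hblock D' hD' i hi'.1 hi'.2.le)
  calc ∑ D ∈ P, edist (f (x D)) (f (y D))
      = ∑ D ∈ P, edist (f (χ (idx (x D)))) (f (χ (idx (y D)))) := by
        refine Finset.sum_congr rfl fun D hD => ?_
        rw [hχ_idx _ (Or.inl ⟨D, hD, rfl⟩), hχ_idx _ (Or.inr ⟨D, hD, rfl⟩)]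
    _ ≤ ∑ i ∈ Finset.range (q ^ lam - 1), edist (f (χ i)) (f (χ (i + 1))) :=
        sum_edist_le_sum_range_edist (fun i => f (χ i)) hdisj'
          fun D _ => Nat.le_sub_one_of_lt (max_lt (hidx_lt _) (hidx_lt _))
    _ = ∑ i ∈ Finset.Ico 1 (q ^ lam), ENNReal.ofReal |f (χ i) - f (χ (i - 1))| :=
        (sum_Ico_one_ofReal_abs_sub _ _).symm
    _ ≤ VBeerLevel K q π S f lam := le_iSup_of_le ⟨χ, fun i _ => hχ_mem i⟩ le_rfl

theorem VBeerLevel_le_VBeer (f : RoI K → ℝ) {lam : ℕ} (hlam : 1 ≤ lam) :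
    VBeerLevel K q π S f lam ≤ VBeer K q π S f := by
  obtain ⟨l, rfl⟩ := Nat.exists_eq_add_of_le' hlam
  exact le_iSup (fun l => VBeerLevel K q π S f (l + 1)) l

theorem sum_edist_le_VBeer (hq : 1 < q) (hπ : ‖(π : K)‖ = (q : ℝ)⁻¹)
    (hunif : ∀ x : RoI K, ‖(x : K)‖ < 1 → ‖(x : K)‖ ≤ ‖(π : K)‖) (hS : IsRepSystem K q π S)
    (f : RoI K → ℝ) {P : Finset (Set (RoI K))} (hdisc : ∀ D ∈ P, IsDisc K q D)
    (hdisj : (P : Set (Set (RoI K))).PairwiseDisjoint id)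
    {x y : Set (RoI K) → RoI K} (hx : ∀ D ∈ P, x D ∈ D) (hy : ∀ D ∈ P, y D ∈ D) :
    ∑ D ∈ P, edist (f (x D)) (f (y D)) ≤ VBeer K q π S f := by
  have hr : Tendsto (fun lam : ℕ => (q : ℝ)⁻¹ ^ lam) atTop (𝓝 0) :=
    tendsto_pow_atTop_nhds_zero_of_lt_one (by positivity)
      (inv_lt_one_of_one_lt₀ (by exact_mod_cast hq))
  have hlevel : ∀ᶠ lam in atTop,
      ∀ D ∈ P, ∃ c, ∃ n ≤ lam, D = Metric.closedBall c ((q : ℝ)⁻¹ ^ n) :=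
    (eventually_all_finset P).2 fun D hD => by
      obtain ⟨c, n, rfl⟩ := hdisc D hD
      exact (eventually_ge_atTop n).mono fun lam hn => ⟨c, n, hn, disc_eq_closedBall c n⟩
  have hZ : (x '' P ∪ y '' P).Finite := (P.finite_toSet.image x).union (P.finite_toSet.image y)
  obtain ⟨lam, hlam, hball, hsep⟩ :=
    ((eventually_ge_atTop 1).and (hlevel.and (eventually_pairwise_lt_dist hZ hr))).exists
  exact (sum_edist_le_VBeerLevel hq hπ hunif hS f hdisj hball hx hy hsep).trans
    (VBeerLevel_le_VBeer f hlam)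

end BeerPoints

variable [LocallyCompactSpace K] [BorelSpace K]

theorem VTaib_le_VBeer
    (hq : 1 < q)
    (hπ : ‖(π : K)‖ = (q : ℝ)⁻¹)
    (hunif : ∀ x : RoI K, ‖(x : K)‖ < 1 → ‖(x : K)‖ ≤ ‖(π : K)‖)
    (S : ℕ → RoI K) (hS : IsRepSystem K q π S)
    (f : RoI K → ℝ) :
    VTaib K q f ≤ VBeer K q π S f := by
  refine iSup_le fun ⟨P, hdisc, hdisj, _⟩ => ?_
  calc VPi K f P = ∑ D ∈ P, ⨆ p ∈ D ×ˢ D, ENNReal.ofReal (f p.1 - f p.2) := by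
        simp only [VPi, biSup_prod]
    _ ≤ VBeer K q π S f := by
      refine sum_biSup_le (fun D hD => ?_) fun p hp => ?_
      · obtain ⟨c, n, rfl⟩ := hdisc D hD
        exact ⟨(c, c), by simp [disc_eq_closedBall]⟩
      refine (Finset.sum_le_sum fun D _ => ?_).trans
        (sum_edist_le_VBeer hq hπ hunif hS f hdisc hdisj (x := fun D => (p D).1)
          (y := fun D => (p D).2) (fun D hD => (hp D hD).1) fun D hD => (hp D hD).2)
      rw [edist_dist, Real.dist_eq]
      exact ENNReal.ofReal_le_ofReal (le_abs_self _)

end NAKoksma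
end
end

section
/- If f : O → ℂ is Haar-integrable and continuous at a point x ∈ O, then the level-ordered partial sums of its Fourier series converge to f(x): f(x) = lim_{L→∞} Σ_{γ ∈ Ô, ℓ(γ) ≤ L} f̂(γ)·γ(x). Moreover, if f is continuous at every point of O, then this convergence is uniform on O. -/
open MeasureTheory Set Filter Topology
open scoped ENNReal NNReal

noncomputable section

namespace NAKoksma

variable (K : Type*) [NontriviallyNormedField K] [IsUltrametricDist K]

variable (q : ℕ)

variable [MeasurableSpace K]

variable (π : RoI K)

variable [LocallyCompactSpace K] [BorelSpace K]

/-!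
A continuous character has finite level because the circle has no small subgroups, so the
characters of level at most `L` are exactly those trivial on the open subgroup `π^L O`, that is,
the characters of the finite group `O ⧸ π^L O`. These sum to `|O ⧸ π^L O|` times the indicator
of `π^L O`, and `|O ⧸ π^L O| * μ (π^L O) = 1`; hence the `L`-th partial sum at `x` is the average
of `f` over the disc `x + π^L O` of radius `q^(-L)`. Averages over shrinking discs converge to
`f x` wherever `f` is continuous, and uniformly when `f` is continuous on the compact ring `O`.
-/

open Metric
open scoped Pointwise

theorem _root_.Circle.re_sq (z : Circle) : ((z ^ 2 : Circle) : ℂ).re = 2 * (z : ℂ).re ^ 2 - 1 := by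
  have h := Circle.normSq_coe z
  rw [Complex.normSq_apply] at h
  rw [Circle.coe_pow, sq, Complex.mul_re]
  linarith

/-- With `c = re w`, squaring gives `1 - re (w ^ 2) = 2 (1 - c) (1 + c) ≥ 2 (1 - c)`,
so `1 - c ≤ 2 ^ (-k)` for every `k`. -/
theorem _root_.Circle.eq_one_of_forall_re_pow_pos {w : Circle}
    (h : ∀ n : ℕ, 0 < ((w ^ n : Circle) : ℂ).re) : w = 1 := by
  set d := 1 - (w : ℂ).re
  have hdouble : ∀ k : ℕ, 2 ^ k * d ≤ 1 - ((w ^ 2 ^ k : Circle) : ℂ).re := by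
    intro k
    induction k with
    | zero => simp [d]
    | succ k ih =>
      have hpos := h (2 ^ k)
      have hle : ((w ^ 2 ^ k : Circle) : ℂ).re ≤ 1 :=
        (Complex.re_le_norm _).trans (Circle.norm_coe _).le
      have hsq : w ^ 2 ^ (k + 1) = (w ^ 2 ^ k) ^ 2 := by rw [pow_succ, pow_mul]
      rw [hsq, Circle.re_sq, pow_succ]
      nlinarith
  have hd : d ≤ 0 := by
    by_contra! hd
    obtain ⟨k, hk⟩ := pow_unbounded_of_one_lt (1 / d) one_lt_two
    have := hdouble k
    have := h (2 ^ k)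
    rw [div_lt_iff₀ hd] at hk
    linarith
  have hre : (w : ℂ).re = 1 := le_antisymm ((Complex.re_le_norm _).trans (Circle.norm_coe _).le)
    (by linarith)
  have him : (w : ℂ).im = 0 := by
    have := Circle.normSq_coe w
    rw [Complex.normSq_apply, hre] at this
    nlinarith
  exact Circle.ext (Complex.ext hre him)

section AddChar

variable {G M : Type*} [AddGroup G] [Monoid M]

def _root_.AddChar.quotientEquiv (A : AddSubgroup G) [A.Normal] :
    AddChar (G ⧸ A) M ≃ {γ : AddChar G M // ∀ a ∈ A, γ a = 1} where
  toFun ψ := ⟨ψ.compAddMonoidHom (QuotientAddGroup.mk' A), fun a ha => by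
    simp [(QuotientAddGroup.eq_zero_iff a).2 ha]⟩
  invFun γ := AddChar.toAddMonoidHomEquiv.symm
    (QuotientAddGroup.lift A (AddChar.toAddMonoidHomEquiv γ.1) fun a ha => γ.2 a ha)
  left_inv ψ := by
    ext x
    induction x using QuotientAddGroup.induction_on
    rfl
  right_inv γ := rfl

theorem _root_.AddChar.continuous_of_forall_mem_eq_one [TopologicalSpace G]
    [IsTopologicalAddGroup G] [TopologicalSpace M] {A : AddSubgroup G} (hA : IsOpen (A : Set G))
    {γ : AddChar G M} (hγ : ∀ a ∈ A, γ a = 1) : Continuous γ := by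
  refine ((IsLocallyConstant.iff_eventually_eq _).2 fun x => ?_).continuous
  have hnear : ∀ᶠ y in 𝓝 x, y - x ∈ A :=
    (continuous_id.sub continuous_const).continuousAt.preimage_mem_nhds
      (by simpa using hA.mem_nhds A.zero_mem)
  filter_upwards [hnear] with y hy
  rw [← sub_add_cancel y x, AddChar.map_add_eq_mul, hγ _ hy, one_mul]

end AddChar

section CompactGroup

variable {G : Type*} [AddCommGroup G] [TopologicalSpace G] [IsTopologicalAddGroup G]
  [CompactSpace G] [MeasurableSpace G] [BorelSpace G]
  (μ : Measure G) [IsProbabilityMeasure μ] [μ.IsAddLeftInvariant]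

theorem measureReal_vadd_eq_inv_index {A : AddSubgroup G} (hA : IsOpen (A : Set G)) (x : G) :
    μ.real (x +ᵥ (A : Set G)) = (A.index : ℝ)⁻¹ := by
  have : Finite (G ⧸ A) := A.quotient_finite_of_isOpen hA
  have : A.FiniteIndex := AddSubgroup.finiteIndex_of_finite_quotient
  have h := A.index_mul_measure hA.measurableSet μ
  rw [measure_univ, mul_comm] at h
  rw [measureReal_def, measure_vadd, ENNReal.eq_inv_of_mul_eq_one_left h, ENNReal.toReal_inv,
    ENNReal.toReal_natCast]

theorem tsum_fourier_annihilator_eq_setAverage {A : AddSubgroup G} (hA : IsOpen (A : Set G))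
    {f : G → ℂ} (hf : Integrable f μ) (x : G) :
    ∑' γ : {γ : AddChar G Circle // ∀ a ∈ A, γ a = 1},
        (∫ t, f t * starRingEnd ℂ ((γ.1 t : Circle) : ℂ) ∂μ) * ((γ.1 x : Circle) : ℂ) =
      ⨍ t in x +ᵥ (A : Set G), f t ∂μ := by
  classical
  have : Finite (G ⧸ A) := A.quotient_finite_of_isOpen hA
  have : DiscreteTopology (G ⧸ A) := QuotientAddGroup.discreteTopology hA
  have := Fintype.ofFinite (G ⧸ A)
  let e := AddChar.circleEquivComplex.symm.toEquiv.trans (AddChar.quotientEquiv (M := Circle) A)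
  have he : ∀ ψ t, (((e ψ).1 t : Circle) : ℂ) = ψ t := fun _ _ => rfl
  rw [← e.tsum_eq, tsum_fintype]
  simp only [he]
  have hterm : ∀ ψ : AddChar (G ⧸ A) ℂ, (∫ t, f t * starRingEnd ℂ (ψ t) ∂μ) * ψ x =
      ∫ t, f t * ψ ((x - t : G) : G ⧸ A) ∂μ := fun ψ => by
    rw [← integral_mul_const]
    refine integral_congr_ae (ae_of_all _ fun t => ?_)
    dsimp only
    rw [QuotientAddGroup.mk_sub, sub_eq_add_neg, AddChar.map_add_eq_mul, AddChar.map_neg_eq_conj]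
    ring
  have hint : ∀ ψ : AddChar (G ⧸ A) ℂ, Integrable (fun t => f t * ψ ((x - t : G) : G ⧸ A)) μ :=
    fun ψ => hf.mul_bdd (c := 1)
      ((continuous_of_discreteTopology.comp
        (continuous_quotient_mk'.comp (continuous_const.sub continuous_id))).aestronglyMeasurable)
      (ae_of_all _ fun t => (ψ.norm_apply _).le)
  rw [Finset.sum_congr rfl fun ψ _ => hterm ψ, ← integral_finsetSum _ fun ψ _ => hint ψ]
  simp only [← Finset.mul_sum, AddChar.sum_apply_eq_ite, QuotientAddGroup.eq_zero_iff]
  set s := x +ᵥ (A : Set G)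
  have hs : MeasurableSet s := (hA.vadd x).measurableSet
  have hmem : ∀ t, x - t ∈ A ↔ t ∈ s := fun t => by
    rw [mem_leftAddCoset_iff, ← neg_sub, neg_mem_iff, sub_eq_neg_add, SetLike.mem_coe]
  have hμs : μ.real s = (Fintype.card (G ⧸ A) : ℝ)⁻¹ := by
    rw [measureReal_vadd_eq_inv_index μ hA, AddSubgroup.index, Nat.card_eq_fintype_card]
  calc ∫ t, f t * (if x - t ∈ A then (Fintype.card (G ⧸ A) : ℂ) else 0) ∂μ
      = ∫ t, s.indicator (fun t => (Fintype.card (G ⧸ A) : ℂ) * f t) t ∂μ := by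
        refine integral_congr_ae (ae_of_all _ fun t => ?_)
        by_cases ht : t ∈ s
        · simp [(hmem t).2 ht, ht, mul_comm]
        · simp [mt (hmem t).1 ht, ht]
    _ = ⨍ t in s, f t ∂μ := by
        rw [integral_indicator hs, integral_const_mul, setAverage_eq, hμs, inv_inv,
          Complex.real_smul, Complex.ofReal_natCast]

end CompactGroup

theorem tsum_fourier_annihilator_closedBall_eq_setAverage {G : Type*} [SeminormedAddCommGroup G]
    [IsUltrametricDist G] [CompactSpace G] [MeasurableSpace G] [BorelSpace G]
    (μ : Measure G) [IsProbabilityMeasure μ] [μ.IsAddLeftInvariant] {r : ℝ} (hr : 0 < r)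
    {f : G → ℂ} (hf : Integrable f μ) (x : G) :
    ∑' γ : {γ : AddChar G Circle // ∀ a ∈ closedBall (0 : G) r, γ a = 1},
        (∫ t, f t * starRingEnd ℂ ((γ.1 t : Circle) : ℂ) ∂μ) * ((γ.1 x : Circle) : ℂ) =
      ⨍ t in closedBall x r, f t ∂μ := by
  rw [← vadd_closedBall_zero r x]
  exact tsum_fourier_annihilator_eq_setAverage μ
    (IsUltrametricDist.closedBall_openAddSubgroup G hr).isOpen hf x

section SetAverage

variable {X E : Type*} [MeasurableSpace X] {μ : Measure X} [NormedAddCommGroup E]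
  [NormedSpace ℝ E] [CompleteSpace E] {f : X → E}

theorem dist_setAverage_le {s : Set X} (hs0 : μ s ≠ 0) (hs : μ s ≠ ∞) (hf : IntegrableOn f s μ)
    {c : E} {ε : ℝ} (h : ∀ t ∈ s, dist (f t) c ≤ ε) : dist (⨍ t in s, f t ∂μ) c ≤ ε := by
  have hμ : 0 < μ.real s := ENNReal.toReal_pos hs0 hs
  have hsub : (⨍ t in s, f t ∂μ) - c = (μ.real s)⁻¹ • ∫ t in s, (f t - c) ∂μ := by
    rw [integral_sub hf (integrableOn_const hs), setIntegral_const, smul_sub,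
      inv_smul_smul₀ hμ.ne', setAverage_eq]
  rw [dist_eq_norm, hsub, norm_smul, norm_inv, Real.norm_of_nonneg hμ.le, inv_mul_le_iff₀ hμ,
    mul_comm]
  exact norm_setIntegral_le_of_norm_le_const hs.lt_top fun t ht => by
    rw [← dist_eq_norm]
    exact h t ht

variable [PseudoMetricSpace X] (μ) [IsFiniteMeasure μ] [μ.IsOpenPosMeasure] {r : ℕ → ℝ}

theorem dist_setAverage_closedBall_le (hf : Integrable f μ) {x : X} {ρ ε : ℝ} (hρ : 0 < ρ)
    (h : ∀ t, dist t x ≤ ρ → dist (f t) (f x) ≤ ε) :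
    dist (⨍ t in closedBall x ρ, f t ∂μ) (f x) ≤ ε :=
  dist_setAverage_le (measure_closedBall_pos μ x hρ).ne' (measure_ne_top μ _) hf.integrableOn
    fun t ht => h t ht

theorem tendsto_setAverage_closedBall (hf : Integrable f μ) (hr0 : ∀ n, 0 < r n)
    (hr : Tendsto r atTop (𝓝 0)) {x : X} (hfx : ContinuousAt f x) :
    Tendsto (fun n => ⨍ t in closedBall x (r n), f t ∂μ) atTop (𝓝 (f x)) := by
  refine Metric.tendsto_atTop.2 fun ε hε => ?_
  obtain ⟨δ, hδ, hfδ⟩ := Metric.continuousAt_iff.1 hfx (ε / 2) (half_pos hε)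
  obtain ⟨N, hN⟩ := eventually_atTop.1 (hr.eventually (gt_mem_nhds hδ))
  refine ⟨N, fun n hn => (dist_setAverage_closedBall_le μ hf (hr0 n) fun t ht => ?_).trans_lt
    (half_lt_self hε)⟩
  exact (hfδ (ht.trans_lt (hN n hn))).le

theorem tendstoUniformly_setAverage_closedBall (hf : Integrable f μ) (hr0 : ∀ n, 0 < r n)
    (hr : Tendsto r atTop (𝓝 0)) (hfu : UniformContinuous f) :
    TendstoUniformly (fun n x => ⨍ t in closedBall x (r n), f t ∂μ) f atTop := by
  refine Metric.tendstoUniformly_iff.2 fun ε hε => ?_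
  obtain ⟨δ, hδ, hfδ⟩ := Metric.uniformContinuous_iff.1 hfu (ε / 2) (half_pos hε)
  filter_upwards [hr.eventually (gt_mem_nhds hδ)] with n hn x
  rw [dist_comm]
  exact (dist_setAverage_closedBall_le μ hf (hr0 n) fun t ht =>
    (hfδ (ht.trans_lt hn)).le).trans_lt (half_lt_self hε)

end SetAverage

section IntegerRing

variable {F : Type*} [NontriviallyNormedField F] [IsUltrametricDist F] {ϖ : RoI F}

instance [LocallyCompactSpace F] : CompactSpace (RoI F) := by
  have := ProperSpace.of_nontriviallyNormedField_of_weaklyLocallyCompactSpace F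
  refine isCompact_iff_compactSpace.1 ?_
  convert isCompact_closedBall (0 : F) 1
  ext x
  simp [RoI]

theorem exists_forall_apply_pow_mul_eq_one (hϖ1 : ‖(ϖ : F)‖ < 1) {γ : AddChar (RoI F) Circle}
    (hγ : Continuous γ) : ∃ l : ℕ, ∀ y, γ (ϖ ^ l * y) = 1 := by
  have hU : {y : RoI F | 0 < ((γ y : Circle) : ℂ).re} ∈ 𝓝 0 :=
    (isOpen_lt continuous_const
      (Complex.continuous_re.comp (continuous_subtype_val.comp hγ))).mem_nhds
        (show 0 < ((γ 0 : Circle) : ℂ).re by simp)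
  obtain ⟨δ, hδ, hball⟩ := Metric.mem_nhds_iff.1 hU
  obtain ⟨l, hl⟩ := exists_pow_lt_of_lt_one hδ hϖ1
  refine ⟨l, fun y => Circle.eq_one_of_forall_re_pow_pos fun n => ?_⟩
  rw [← AddChar.map_nsmul_eq_pow, ← mul_smul_comm]
  apply hball
  rw [mem_ball_zero_iff]
  show ‖(ϖ : F) ^ l * ((n • y : RoI F) : F)‖ < δ
  rw [norm_mul, norm_pow]
  exact (mul_le_of_le_one_right (by positivity) (n • y).2).trans_lt hl

theorem pow_dvd_iff_norm_le (hϖ0 : 0 < ‖(ϖ : F)‖) {L : ℕ} {y : RoI F} :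
    ϖ ^ L ∣ y ↔ ‖(y : F)‖ ≤ ‖(ϖ : F)‖ ^ L := by
  constructor
  · rintro ⟨z, rfl⟩
    push_cast
    rw [norm_mul, norm_pow]
    exact mul_le_of_le_one_right (by positivity) z.2
  · intro hy
    have hϖL : (ϖ : F) ^ L ≠ 0 := pow_ne_zero _ (norm_pos_iff.1 hϖ0)
    refine ⟨⟨(y : F) / (ϖ : F) ^ L, ?_⟩, Subtype.ext ?_⟩
    · show ‖(y : F) / (ϖ : F) ^ L‖ ≤ 1
      rw [norm_div, norm_pow, div_le_one (by positivity)]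
      exact hy
    · push_cast
      field_simp

theorem continuous_and_charLevel_le_iff (hϖ0 : 0 < ‖(ϖ : F)‖) (hϖ1 : ‖(ϖ : F)‖ < 1)
    {γ : AddChar (RoI F) Circle} {L : ℕ} :
    Continuous γ ∧ charLevel F ϖ γ ≤ L ↔ ∀ a ∈ closedBall (0 : RoI F) (‖(ϖ : F)‖ ^ L), γ a = 1 := by
  have hball : ∀ a, a ∈ closedBall (0 : RoI F) (‖(ϖ : F)‖ ^ L) ↔ ϖ ^ L ∣ a := fun a => by
    rw [mem_closedBall_zero_iff, pow_dvd_iff_norm_le hϖ0]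
    rfl
  simp only [hball]
  constructor
  · rintro ⟨hγ, hL⟩ a ⟨z, rfl⟩
    obtain ⟨l, hl⟩ := exists_forall_apply_pow_mul_eq_one hϖ1 hγ
    have hlevel : ∀ y, γ (ϖ ^ charLevel F ϖ γ * y) = 1 :=
      Nat.sInf_mem (s := {l | ∀ y, γ (ϖ ^ l * y) = 1}) ⟨l, hl⟩
    rw [← Nat.sub_add_cancel hL, pow_add, mul_comm (ϖ ^ _), mul_assoc]
    exact hlevel _
  · intro h
    refine ⟨AddChar.continuous_of_forall_mem_eq_one
      (IsUltrametricDist.closedBall_openAddSubgroup (RoI F) (pow_pos hϖ0 L)).isOpen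
      fun a ha => h a ((hball a).1 ha), Nat.sInf_le fun y => h _ (dvd_mul_right _ _)⟩

end IntegerRing

theorem fourier_series_partial_sums_converge
    (hq : 1 < q)
    (hπ : ‖(π : K)‖ = (q : ℝ)⁻¹)
    (μ : Measure (RoI K)) [IsProbabilityMeasure μ] [μ.IsAddHaarMeasure]
    (f : RoI K → ℂ) (hf : Integrable f μ) :
    (∀ x : RoI K, ContinuousAt f x →
      Tendsto (fun L : ℕ =>
          ∑' γ : {γ : AddChar (RoI K) Circle // Continuous ⇑γ ∧ charLevel K π γ ≤ L},
            fourierCoeff K μ f γ.1 * ((γ.1 x : Circle) : ℂ))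
        atTop (𝓝 (f x))) ∧
    (Continuous f → TendstoUniformly (fun (L : ℕ) (x : RoI K) =>
          ∑' γ : {γ : AddChar (RoI K) Circle // Continuous ⇑γ ∧ charLevel K π γ ≤ L},
            fourierCoeff K μ f γ.1 * ((γ.1 x : Circle) : ℂ)) f atTop) := by
  have hπ0 : 0 < ‖(π : K)‖ := by
    rw [hπ]
    exact inv_pos.2 (by exact_mod_cast zero_lt_one.trans hq)
  have hπ1 : ‖(π : K)‖ < 1 := by rw [hπ]; exact inv_lt_one_of_one_lt₀ (by exact_mod_cast hq)
  have hr0 : ∀ L : ℕ, 0 < ‖(π : K)‖ ^ L := fun L => pow_pos hπ0 L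
  have hr := tendsto_pow_atTop_nhds_zero_of_lt_one hπ0.le hπ1
  have hsum : ∀ (L : ℕ) (x : RoI K),
      ∑' γ : {γ : AddChar (RoI K) Circle // Continuous ⇑γ ∧ charLevel K π γ ≤ L},
          fourierCoeff K μ f γ.1 * ((γ.1 x : Circle) : ℂ) =
        ⨍ t in closedBall x (‖(π : K)‖ ^ L), f t ∂μ := fun L x => by
    rw [← tsum_fourier_annihilator_closedBall_eq_setAverage μ (hr0 L) hf x]
    exact (Equiv.subtypeEquivRight fun γ : AddChar (RoI K) Circle =>
      continuous_and_charLevel_le_iff (L := L) hπ0 hπ1).tsum_eq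
        fun γ => (∫ t, f t * starRingEnd ℂ ((γ.1 t : Circle) : ℂ) ∂μ) * ((γ.1 x : Circle) : ℂ)
  simp only [hsum]
  exact ⟨fun x hx => tendsto_setAverage_closedBall μ hf hr0 hr hx,
    fun hfc => tendstoUniformly_setAverage_closedBall μ hf hr0 hr
      (CompactSpace.uniformContinuous_of_continuous hfc)⟩

end NAKoksma
end
end
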